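/- Let C, D ∈ ℝ and consider the vector fields on ℝ³: X' = ∂/∂x (p ↦ (1,0,0)), H = ∂/∂h (p ↦ (0,1,0)), Y = −h ∂/∂h + z ∂/∂z ((x,h,z) ↦ (0,−h,z)), and T(x,h,z) = (Dh, ½(D²−C)h², (C−D²)zh − 1). Then the following Lie bracket relations hold: [Y,H] = H, [Y,X'] = 0, [H,X'] = 0, [X',T] = 0, [Y,T] = −T, and [H,T] = D·X' + (C−D²)·Y. -/

import Mathlib

noncomputable section

abbrev V3 : Type := Fin 3 → ℝ

/-- The Lie bracket of vector fields: `[V,W](p) = D_pW (V(p)) − D_pV (W(p))`. -/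
def VB (V W : V3 → V3) : V3 → V3 :=
  fun p => fderiv ℝ W p (V p) - fderiv ℝ V p (W p)

/-- `X' = ∂/∂x`. -/
def Xf : V3 → V3 := fun _ => ![1, 0, 0]

/-- `H = ∂/∂h`. -/
def Hf : V3 → V3 := fun _ => ![0, 1, 0]

/-- `Y = −h ∂/∂h + z ∂/∂z`. -/
def Yf : V3 → V3 := fun p => ![0, -p 1, p 2]

/-- `T(x,h,z) = (Dh, ½(D²−C)h², (C−D²)zh − 1)`. -/
def Tf (C D : ℝ) : V3 → V3 :=
  fun p => ![D * p 1, (D ^ 2 - C) / 2 * p 1 ^ 2, (C - D ^ 2) * p 2 * p 1 - 1]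

open ContinuousLinearMap

lemma VB_eq_of_hasFDerivAt {V W : V3 → V3} {V' W' : V3 →L[ℝ] V3} {p : V3}
    (hV : HasFDerivAt V V' p) (hW : HasFDerivAt W W' p) :
    VB V W p = W' (V p) - V' (W p) := by
  rw [VB, hV.fderiv, hW.fderiv]

lemma hasFDerivAt_Xf (p : V3) : HasFDerivAt Xf (0 : V3 →L[ℝ] V3) p :=
  hasFDerivAt_const _ p

lemma hasFDerivAt_Hf (p : V3) : HasFDerivAt Hf (0 : V3 →L[ℝ] V3) p :=
  hasFDerivAt_const _ p

def Ylin : V3 →L[ℝ] V3 := pi ![0, -proj 1, proj 2]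

lemma hasFDerivAt_Yf (p : V3) : HasFDerivAt Yf Ylin p := by
  have hY : Yf = Ylin := by
    ext q i
    fin_cases i <;> simp [Yf, Ylin]
  exact hY ▸ Ylin.hasFDerivAt

def jacobianTf (C D : ℝ) (p : V3) : V3 →L[ℝ] V3 :=
  pi ![D • proj 1, ((D ^ 2 - C) * p 1) • proj 1,
    ((C - D ^ 2) * p 1) • proj 2 + ((C - D ^ 2) * p 2) • proj 1]

lemma hasFDerivAt_Tf (C D : ℝ) (p : V3) : HasFDerivAt (Tf C D) (jacobianTf C D p) p := by
  have h1 : HasFDerivAt (fun q : V3 => q 1) (proj 1 : V3 →L[ℝ] ℝ) p := hasFDerivAt_apply 1 p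
  have h2 : HasFDerivAt (fun q : V3 => q 2) (proj 2 : V3 →L[ℝ] ℝ) p := hasFDerivAt_apply 2 p
  refine hasFDerivAt_pi'' fun i => ?_
  fin_cases i
  · exact (h1.const_mul D).congr_fderiv (by ext v; simp [jacobianTf])
  · exact ((h1.pow 2).const_mul _).congr_fderiv (by ext v; simp [jacobianTf]; ring)
  · exact (((h2.const_mul _).mul h1).sub_const 1).congr_fderiv (by ext v; simp [jacobianTf]; ring)

lemma VB_Yf_Hf (p : V3) : VB Yf Hf p = Hf p := by
  rw [VB_eq_of_hasFDerivAt (hasFDerivAt_Yf p) (hasFDerivAt_Hf p)]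
  ext i; fin_cases i <;> simp [Hf, Ylin]

lemma VB_Yf_Xf (p : V3) : VB Yf Xf p = 0 := by
  rw [VB_eq_of_hasFDerivAt (hasFDerivAt_Yf p) (hasFDerivAt_Xf p)]
  ext i; fin_cases i <;> simp [Xf, Ylin]

lemma VB_Hf_Xf (p : V3) : VB Hf Xf p = 0 := by
  rw [VB_eq_of_hasFDerivAt (hasFDerivAt_Hf p) (hasFDerivAt_Xf p)]
  simp

lemma VB_Xf_Tf (C D : ℝ) (p : V3) : VB Xf (Tf C D) p = 0 := by
  rw [VB_eq_of_hasFDerivAt (hasFDerivAt_Xf p) (hasFDerivAt_Tf C D p)]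
  ext i; fin_cases i <;> simp [Xf, jacobianTf]

lemma VB_Yf_Tf (C D : ℝ) (p : V3) : VB Yf (Tf C D) p = -Tf C D p := by
  rw [VB_eq_of_hasFDerivAt (hasFDerivAt_Yf p) (hasFDerivAt_Tf C D p)]
  ext i; fin_cases i <;> simp [Yf, Tf, Ylin, jacobianTf] <;> ring

lemma VB_Hf_Tf (C D : ℝ) (p : V3) : VB Hf (Tf C D) p = D • Xf p + (C - D ^ 2) • Yf p := by
  rw [VB_eq_of_hasFDerivAt (hasFDerivAt_Hf p) (hasFDerivAt_Tf C D p)]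
  ext i; fin_cases i <;> simp [Hf, Xf, Yf, jacobianTf]; ring

/-- the Lie bracket relations `[Y,H] = H`, `[Y,X'] = 0`, `[H,X'] = 0`,
`[X',T] = 0`, `[Y,T] = −T` and `[H,T] = D·X' + (C−D²)·Y` hold. -/
theorem bracket_relations (C D : ℝ) :
    (∀ p : V3, VB Yf Hf p = Hf p) ∧
    (∀ p : V3, VB Yf Xf p = 0) ∧
    (∀ p : V3, VB Hf Xf p = 0) ∧
    (∀ p : V3, VB Xf (Tf C D) p = 0) ∧
    (∀ p : V3, VB Yf (Tf C D) p = -(Tf C D p)) ∧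
    (∀ p : V3, VB Hf (Tf C D) p = D • Xf p + (C - D ^ 2) • Yf p) :=
  ⟨VB_Yf_Hf, VB_Yf_Xf, VB_Hf_Xf, VB_Xf_Tf C D, VB_Yf_Tf C D, VB_Hf_Tf C D⟩
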